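/- Let 𝔤 = 𝔰𝔩₂(ℂ) with standard basis h, e, f. Cherednik's trigonometric solution ρ(z) = (cos z/(2 sin z))·h⊗h + (1/ sin z)·(e⊗f + f⊗e) + (sin z)·f⊗f satisfies the classical Yang–Baxter equation with one spectral parameter: for all x, y ∈ ℂ with sin x ≠ 0, sin y ≠ 0 and sin(x+y) ≠ 0, one has [ρ(x), ρ(x+y)]^{12,13} + [ρ(x+y), ρ(y)]^{13,23} + [ρ(x), ρ(y)]^{12,23} = 0. -/

import Mathlib

/-!
Cherednik's `ρ(z)` belongs to the family `a • h ⊗ h + b • (e ⊗ f + f ⊗ e) + c • f ⊗ f`.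
For three members of this family, the relations `[h, e] = 2e`, `[h, f] = -2f`, `[e, f] = h`
alone turn the Yang–Baxter expression into a combination of nine basis tensors of
`𝔤 ⊗ 𝔤 ⊗ 𝔤`, whose coefficients are, up to sign, six quadratic expressions in the parameters.
For `a = cot z / 2`, `b = 1 / sin z`, `c = sin z` these vanish by the addition formulas
`cot x + cot y = sin (x + y) / (sin x sin y)` and `sin² A - sin² B = sin (A + B) sin (A - B)`.
-/

open scoped TensorProduct
open Matrix

noncomputable section

/-- The Lie algebra of `2 × 2` complex matrices (ambient algebra of `𝔰𝔩₂(ℂ)`). -/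
abbrev M2 : Type := Matrix (Fin 2) (Fin 2) ℂ

/-- `h = e₁₁ - e₂₂`. -/
def hM : M2 := Matrix.single 0 0 1 - Matrix.single 1 1 1

/-- `e = e₁₂`. -/
def eM : M2 := Matrix.single 0 1 1

/-- `f = e₂₁`. -/
def fM : M2 := Matrix.single 1 0 1

/-- Cherednik's trigonometric solution
`ρ(z) = (cos z/(2 sin z))·h⊗h + (1/sin z)·(e⊗f + f⊗e) + (sin z)·f⊗f` for `𝔰𝔩₂(ℂ)`. -/
def ρCherednik (z : ℂ) : M2 ⊗[ℂ] M2 :=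
  (Complex.cos z / (2 * Complex.sin z)) • (hM ⊗ₜ[ℂ] hM)
    + (Complex.sin z)⁻¹ • (eM ⊗ₜ[ℂ] fM + fM ⊗ₜ[ℂ] eM)
    + Complex.sin z • (fM ⊗ₜ[ℂ] fM)

def sl2Tensor {K L : Type*} [CommSemiring K] [AddCommMonoid L] [Module K L]
    (h e f : L) (a b c : K) : L ⊗[K] L :=
  a • (h ⊗ₜ h) + b • (e ⊗ₜ f + f ⊗ₜ e) + c • (f ⊗ₜ f)

/-- The six relations are the vanishing of the coefficients of `e ⊗ h ⊗ f`, `e ⊗ f ⊗ h`,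
`h ⊗ e ⊗ f`, `h ⊗ f ⊗ f`, `f ⊗ f ⊗ h` and `f ⊗ h ⊗ f` in the expansion; the coefficients of
`f ⊗ h ⊗ e`, `f ⊗ e ⊗ h` and `h ⊗ f ⊗ e` are their negatives. -/
theorem IsSl2Triple.cybe_sl2Tensor {K L : Type*} [CommRing K] [LieRing L] [LieAlgebra K L]
    {h e f : L} (t : IsSl2Triple h e f)
    (B1213 B1223 B1323 : (L ⊗[K] L) →ₗ[K] (L ⊗[K] L) →ₗ[K] (L ⊗[K] (L ⊗[K] L)))
    (hB1213 : ∀ a b c d : L, B1213 (a ⊗ₜ b) (c ⊗ₜ d) = ⁅a, c⁆ ⊗ₜ (b ⊗ₜ d))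
    (hB1223 : ∀ a b c d : L, B1223 (a ⊗ₜ b) (c ⊗ₜ d) = a ⊗ₜ (⁅b, c⁆ ⊗ₜ d))
    (hB1323 : ∀ a b c d : L, B1323 (a ⊗ₜ b) (c ⊗ₜ d) = a ⊗ₜ (c ⊗ₜ ⁅b, d⁆))
    {a₁ b₁ c₁ a₂ b₂ c₂ a₃ b₃ c₃ : K}
    (h₁ : 2 * b₂ * (a₁ + a₃) = b₁ * b₃) (h₂ : 2 * b₁ * (a₃ - a₂) = b₂ * b₃)
    (h₃ : 2 * b₃ * (a₁ - a₂) = b₁ * b₂) (h₄ : b₁ * c₂ - b₂ * c₁ = 2 * c₃ * (a₁ + a₂))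
    (h₅ : b₂ * c₃ - b₃ * c₂ = -2 * c₁ * (a₂ + a₃))
    (h₆ : b₁ * c₃ - b₃ * c₁ = 2 * c₂ * (a₁ - a₃)) :
    B1213 (sl2Tensor h e f a₁ b₁ c₁) (sl2Tensor h e f a₂ b₂ c₂)
      + B1323 (sl2Tensor h e f a₂ b₂ c₂) (sl2Tensor h e f a₃ b₃ c₃)
      + B1223 (sl2Tensor h e f a₁ b₁ c₁) (sl2Tensor h e f a₃ b₃ c₃) = 0 := by
  have he := t.lie_h_e_smul K
  have hf := t.lie_lie_smul_f K
  have eh : ⁅e, h⁆ = -((2 : K) • e) := by rw [← lie_skew, he]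
  have fh : ⁅f, h⁆ = (2 : K) • f := by rw [← lie_skew, hf, neg_neg]
  have fe : ⁅f, e⁆ = -h := by rw [← lie_skew, t.lie_e_f]
  simp only [sl2Tensor, map_add, map_smul, LinearMap.add_apply, LinearMap.smul_apply,
    hB1213, hB1223, hB1323, he, hf, eh, fh, fe, t.lie_e_f, lie_self,
    TensorProduct.smul_tmul, TensorProduct.tmul_smul, TensorProduct.neg_tmul,
    TensorProduct.tmul_neg, TensorProduct.zero_tmul, TensorProduct.tmul_zero, smul_zero, smul_neg]
  match_scalars
  · linear_combination h₂
  · linear_combination -h₂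
  · linear_combination h₅
  · linear_combination h₁
  · linear_combination h₃
  · linear_combination h₄
  · linear_combination -h₁
  · linear_combination -h₃
  · linear_combination h₆

section

attribute [local instance] LieRing.ofAssociativeRing

theorem isSl2Triple_hM_eM_fM : IsSl2Triple hM eM fM where
  h_ne_zero h0 := by simpa [hM] using congrFun (congrFun h0 0) 0
  lie_e_f := by
    ext i j
    fin_cases i <;> fin_cases j <;> norm_num [hM, eM, fM, Ring.lie_def]
  lie_h_e_nsmul := by
    ext i j
    fin_cases i <;> fin_cases j <;> norm_num [hM, eM, Ring.lie_def]
  lie_h_f_nsmul := by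
    ext i j
    fin_cases i <;> fin_cases j <;> norm_num [hM, fM, Ring.lie_def]

end

theorem ρCherednik_eq_sl2Tensor (z : ℂ) :
    ρCherednik z =
      sl2Tensor hM eM fM (Complex.cos z / (2 * Complex.sin z)) (Complex.sin z)⁻¹ (Complex.sin z) :=
  rfl

/-- Cherednik's trigonometric solution satisfies the classical
Yang–Baxter equation with one spectral parameter. -/
theorem statement17
    (B1213 B1223 B1323 :
      (M2 ⊗[ℂ] M2) →ₗ[ℂ] (M2 ⊗[ℂ] M2) →ₗ[ℂ] (M2 ⊗[ℂ] (M2 ⊗[ℂ] M2)))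
    (hB1213 : ∀ a b c d : M2,
      B1213 (a ⊗ₜ[ℂ] b) (c ⊗ₜ[ℂ] d) = ⁅a, c⁆ ⊗ₜ[ℂ] (b ⊗ₜ[ℂ] d))
    (hB1223 : ∀ a b c d : M2,
      B1223 (a ⊗ₜ[ℂ] b) (c ⊗ₜ[ℂ] d) = a ⊗ₜ[ℂ] (⁅b, c⁆ ⊗ₜ[ℂ] d))
    (hB1323 : ∀ a b c d : M2,
      B1323 (a ⊗ₜ[ℂ] b) (c ⊗ₜ[ℂ] d) = a ⊗ₜ[ℂ] (c ⊗ₜ[ℂ] ⁅b, d⁆))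
    :
    ∀ x y : ℂ, Complex.sin x ≠ 0 → Complex.sin y ≠ 0 → Complex.sin (x + y) ≠ 0 →
      B1213 (ρCherednik x) (ρCherednik (x + y)) + B1323 (ρCherednik (x + y)) (ρCherednik y)
        + B1223 (ρCherednik x) (ρCherednik y) = 0 := by
  intro x y hx hy hxy
  -- matrices carry no global `LieRing` instance: the bracket in the hypotheses is the commutator
  let : LieRing M2 := LieRing.ofAssociativeRing
  have Hx := Complex.sin_sq_add_cos_sq x
  have Hy := Complex.sin_sq_add_cos_sq y
  simp only [ρCherednik_eq_sl2Tensor]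
  refine isSl2Triple_hM_eM_fM.cybe_sl2Tensor B1213 B1223 B1323 hB1213 hB1223 hB1323
    ?_ ?_ ?_ ?_ ?_ ?_ <;> field_simp <;> simp only [Complex.sin_add, Complex.cos_add]
  · ring
  · linear_combination Complex.sin x * Hy
  · linear_combination Complex.sin y * Hx
  · linear_combination Complex.sin x ^ 2 * Hy
  · linear_combination -(Complex.sin y ^ 2 * Hx)
  · linear_combination Complex.sin x ^ 2 * Hy - Complex.sin y ^ 2 * Hx

end
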